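/- arXiv:1912.03327 — 6 statements merged into one kernel-verified Lean document; each statement's English description precedes it below -/
import Mathlib

section
/- Let P be a separative partial order satisfying the κ-chain condition (every antichain has size < κ). Then for every subset Q of P there is a subset Q' of Q with |Q'| < κ such that the set of common lower bounds of Q' equals the set of common lower bounds of Q. -/
/-!
Take an antichain `A`, maximal among antichains of conditions incompatible with some member of
`Q`, and for each `a ∈ A` pick a witness `f a ∈ Q` incompatible with `a`; by the chain condition
`Q' := range f` has size `< κ`. If `p` lies below all of `Q'` but not below some `q ∈ Q`,
separativity gives `r ≤ p` incompatible with `q`. By maximality `r` is compatible with some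
`a ∈ A`, and a common extension of `r` and `a` lies below `p ≤ f a`, contradicting the choice
of `f a`.
-/

open Cardinal Set

section Compatible

variable {P : Type*} [Preorder P]

def Compatible (p q : P) : Prop := ∃ t, t ≤ p ∧ t ≤ q

theorem Compatible.refl (p : P) : Compatible p p := ⟨p, le_rfl, le_rfl⟩

theorem Compatible.symm {p q : P} (h : Compatible p q) : Compatible q p :=
  let ⟨t, htp, htq⟩ := h
  ⟨t, htq, htp⟩

theorem exists_maximal_pairwise_subset {α : Type*} (r : α → α → Prop) (S : Set α) :
    ∃ A, Maximal (fun A => A ⊆ S ∧ A.Pairwise r) A := by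
  refine zorn_subset _ fun c hcS hc => ⟨⋃₀ c, ⟨?_, ?_⟩, fun s => subset_sUnion_of_mem⟩
  · exact sUnion_subset fun s hs => (hcS hs).1
  · exact (pairwise_sUnion hc.directedOn).2 fun s hs => (hcS hs).2

theorem Maximal.exists_compatible {S A : Set P}
    (hA : Maximal (fun A => A ⊆ S ∧ A.Pairwise (¬ Compatible · ·)) A) {x : P} (hx : x ∈ S) :
    ∃ a ∈ A, Compatible x a := by
  by_contra! hinc
  have hxA : x ∈ A := hA.mem_of_prop_insert
    ⟨insert_subset hx hA.prop.1,
      pairwise_insert.2 ⟨hA.prop.2, fun a ha _ => ⟨hinc a ha, fun h => hinc a ha h.symm⟩⟩⟩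
  exact hinc x hxA (Compatible.refl x)

theorem lowerBounds_range_subset_of_maximal
    (sep : ∀ p q : P, ¬ q ≤ p → ∃ r ≤ q, ¬ Compatible r p) {Q A : Set P}
    (hA : Maximal (fun A => A ⊆ {r | ∃ q ∈ Q, ¬ Compatible r q} ∧
      A.Pairwise (¬ Compatible · ·)) A)
    (f : A → P) (hf : ∀ a : A, ¬ Compatible (a : P) (f a)) :
    lowerBounds (range f) ⊆ lowerBounds Q := by
  intro p hp q hq
  by_contra hpq
  obtain ⟨r, hrp, hrq⟩ := sep q p hpq
  obtain ⟨a, ha, t, htr, hta⟩ := hA.exists_compatible ⟨q, hq, hrq⟩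
  exact hf ⟨a, ha⟩ ⟨t, hta, htr.trans (hrp.trans (hp ⟨⟨a, ha⟩, rfl⟩))⟩

end Compatible

/-- In a separative poset with the κ-chain condition, every subset `Q`
has a subset `Q'` of size `< κ` with the same set of common lower bounds. -/
theorem stmt_0 {P : Type*} [PartialOrder P] (κ : Cardinal)
    (sep : ∀ p q : P, ¬ q ≤ p → ∃ r, r ≤ q ∧ ¬ ∃ t : P, t ≤ r ∧ t ≤ p)
    (cc : ∀ A : Set P, (∀ p ∈ A, ∀ q ∈ A, p ≠ q → ¬ ∃ t : P, t ≤ p ∧ t ≤ q) → #A < κ)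
    (Q : Set P) :
    ∃ Q' ⊆ Q, #Q' < κ ∧
      {p : P | ∀ q ∈ Q', p ≤ q} = {p : P | ∀ q ∈ Q, p ≤ q} := by
  obtain ⟨A, hA⟩ :=
    exists_maximal_pairwise_subset (¬ Compatible · ·) {r : P | ∃ q ∈ Q, ¬ Compatible r q}
  choose f hfQ hf using fun a : A => hA.prop.1 a.2
  have hfQ' : range f ⊆ Q := range_subset_iff.2 hfQ
  refine ⟨range f, hfQ', mk_range_le.trans_lt (cc A hA.prop.2), ?_⟩
  exact (lowerBounds_range_subset_of_maximal sep hA f hf).antisymm (lowerBounds_mono_set hfQ')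
end

section
/- Let κ be an ordinal and λ an ordinal, and order κ × λ by (α, β) ≤ (α', β') if and only if α = α' and β ≥ β'. If κ and λ are infinite cardinals with λ a limit ordinal, then with respect to this order the Souslin number of κ × λ is κ⁺ and every dense subset D of κ × λ contains, for each α < κ, a subset of {α} × λ cofinal in λ (under the reversed order), so the π-Noetherian type of κ × λ equals cf(λ). -/
/-!
Two conditions of `κ × λ` are compatible exactly when they lie in the same fibre, so antichains
are the sets on which the projection to `κ` is injective, and the Souslin number is `κ⁺`.
A dense set `D` meets every fibre in a cofinal subset of `λ`; if every point had fewer than `c`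
points of `D` above it, a subset of size `c` of that fibre would be bounded, whence `cf λ ≤ c`.
Conversely, copying into every fibre a cofinal subset of `λ` of order type `cf λ` gives a dense
set in which each point lies below an initial segment of that order type only.
-/

universe u

open Cardinal Set

section PosetInvariants

variable {α : Type u} (le : α → α → Prop)

noncomputable def souslinNumber : Cardinal.{u} :=
  sInf {c | ¬ ∃ S : Set α, (∀ x ∈ S, ∀ y ∈ S, x ≠ y → ¬ ∃ z, le z x ∧ le z y) ∧ #S = c}

noncomputable def piNoetherianType : Cardinal.{u} :=
  sInf {c | ∃ D : Set α, (∀ x, ∃ q ∈ D, le q x) ∧ ∀ x, #{q | q ∈ D ∧ le x q} < c}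

end PosetInvariants

namespace Order

variable {B : Type u} [LinearOrder B]

theorem cof_le_of_forall_mk_inter_Iic_lt {s : Set B} {c : Cardinal.{u}} (hs : IsCofinal s)
    (h : ∀ b, #(s ∩ Iic b : Set B) < c) : cof B ≤ c := by
  by_contra! hc
  obtain ⟨t, hts, htc⟩ := le_mk_iff_exists_subset.1 (hc.le.trans (cof_le hs))
  obtain ⟨a, ha⟩ := not_isCofinal_iff.1 fun ht => (cof_le ht).not_gt (htc ▸ hc)
  have hta : t ⊆ s ∩ Iic a := fun x hx => ⟨hts hx, (ha x hx).le⟩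
  exact (mk_le_mk_of_subset hta).not_gt (htc ▸ h a)

theorem exists_isCofinal_forall_mk_inter_Iic_lt_cof [WellFoundedLT B] [NoMaxOrder B] :
    ∃ s : Set B, IsCofinal s ∧ ∀ b, #(s ∩ Iic b : Set B) < cof B := by
  obtain ⟨s, hs, htype⟩ := Ordinal.exists_ord_cof_eq B
  refine ⟨s, hs, fun b => ?_⟩
  obtain ⟨b', hbb'⟩ := exists_gt b
  obtain ⟨x, hxs, hbx⟩ := hs b'
  -- `s ∩ Iic b` lies below `x ∈ s`, an initial segment of `s` of order type `< (cof B).ord`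
  have hseg : #(s ∩ Iic b : Set B) ≤ #{y : s // y < ⟨x, hxs⟩} :=
    mk_le_of_injective (f := fun y => ⟨⟨y, y.2.1⟩, y.2.2.trans_lt (hbb'.trans_le hbx)⟩)
      fun y z h => Subtype.ext (congrArg (fun w : {y : s // y < ⟨x, hxs⟩} => (w.1 : B)) h)
  refine hseg.trans_lt ?_
  rw [← Ordinal.card_typein, ← lt_ord, ← htype]
  exact Ordinal.typein_lt_type _ _

end Order

section FiberOrder

variable {A B : Type u}

def fiberLE [LE B] (x y : A × B) : Prop :=
  x.1 = y.1 ∧ y.2 ≤ x.2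

theorem exists_fiberLE_fiberLE_iff [Preorder B] [IsDirectedOrder B] {x y : A × B} :
    (∃ z, fiberLE z x ∧ fiberLE z y) ↔ x.1 = y.1 := by
  refine ⟨fun ⟨z, hzx, hzy⟩ => hzx.1.symm.trans hzy.1, fun h => ?_⟩
  obtain ⟨b, hxb, hyb⟩ := directed_of (· ≤ ·) x.2 y.2
  exact ⟨(x.1, b), ⟨rfl, hxb⟩, ⟨h, hyb⟩⟩

theorem exists_injOn_fst_mk_eq_iff [Nonempty B] {c : Cardinal.{u}} :
    (∃ S : Set (A × B), InjOn Prod.fst S ∧ #S = c) ↔ c ≤ #A := by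
  constructor
  · rintro ⟨S, hS, rfl⟩
    rw [← mk_image_eq_of_injOn _ _ hS]
    exact mk_set_le _
  · intro hc
    obtain ⟨t, rfl⟩ := le_mk_iff_exists_set.1 hc
    obtain ⟨b⟩ := ‹Nonempty B›
    have hinj : Function.Injective fun a : A => (a, b) := fun _ _ h => congrArg Prod.fst h
    refine ⟨(fun a => (a, b)) '' t, ?_, mk_image_eq hinj⟩
    rintro _ ⟨a, -, rfl⟩ _ ⟨a', -, rfl⟩ (h : a = a')
    rw [h]

theorem souslinNumber_fiberLE [Preorder B] [IsDirectedOrder B] [Nonempty B] :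
    souslinNumber (fiberLE (A := A) (B := B)) = Order.succ #A := by
  have hanti : ∀ S : Set (A × B),
      (∀ x ∈ S, ∀ y ∈ S, x ≠ y → ¬ ∃ z, fiberLE z x ∧ fiberLE z y) ↔ InjOn Prod.fst S := by
    intro S
    simp only [exists_fiberLE_fiberLE_iff]
    exact ⟨fun h x hx y hy hxy => by_contra fun hne => h x hx y hy hne hxy,
      fun h x hx y hy hne hxy => hne (h hx hy hxy)⟩
  simp only [souslinNumber, hanti, exists_injOn_fst_mk_eq_iff, not_le]
  exact (Order.succ_eq_csInf _).symm

theorem isCofinal_fiber_of_dense [LE B] {D : Set (A × B)} (hD : ∀ x, ∃ q ∈ D, fiberLE q x)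
    (a : A) : IsCofinal {b | (a, b) ∈ D} := by
  intro b
  obtain ⟨q, hqD, hqa, hbq⟩ := hD (a, b)
  have hq : q = (a, q.2) := Prod.ext hqa rfl
  exact ⟨q.2, hq ▸ hqD, hbq⟩

theorem mk_setOf_mem_fiberLE [Preorder B] (D : Set (A × B)) (x : A × B) :
    #{q | q ∈ D ∧ fiberLE x q} = #({b | (x.1, b) ∈ D} ∩ Iic x.2 : Set B) := by
  have hinj : Function.Injective fun b : B => (x.1, b) := fun _ _ h => congrArg Prod.snd h
  rw [← mk_image_eq hinj]
  congr
  ext ⟨a, b⟩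
  simp only [fiberLE, mem_ofPred_eq, mem_inter_iff, mem_Iic, Prod.mk.injEq]
  constructor
  · rintro ⟨hD, rfl, hb⟩
    exact ⟨b, ⟨hD, hb⟩, rfl, rfl⟩
  · rintro ⟨b, ⟨hD, hb⟩, rfl, rfl⟩
    exact ⟨hD, rfl, hb⟩

theorem piNoetherianType_fiberLE [Nonempty A] [LinearOrder B] [WellFoundedLT B] [NoMaxOrder B] :
    piNoetherianType (fiberLE (A := A) (B := B)) = Order.cof B := by
  obtain ⟨s, hs, hsmall⟩ := Order.exists_isCofinal_forall_mk_inter_Iic_lt_cof (B := B)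
  have hmem : Order.cof B ∈ {c | ∃ D : Set (A × B), (∀ x, ∃ q ∈ D, fiberLE q x) ∧
      ∀ x, #{q | q ∈ D ∧ fiberLE x q} < c} := by
    refine ⟨Set.univ ×ˢ s, fun x => ?_, fun x => ?_⟩
    · obtain ⟨b, hb, hxb⟩ := hs x.2
      exact ⟨(x.1, b), ⟨mem_univ _, hb⟩, rfl, hxb⟩
    · rw [mk_setOf_mem_fiberLE]
      simpa [mem_prod] using hsmall x.2
  refine le_antisymm (csInf_le' hmem) (le_csInf ⟨_, hmem⟩ ?_)
  rintro c ⟨D, hD, hbound⟩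
  obtain ⟨a⟩ := ‹Nonempty A›
  exact Order.cof_le_of_forall_mk_inter_Iic_lt (isCofinal_fiber_of_dense hD a)
    fun b => by simpa only [mk_setOf_mem_fiberLE] using hbound (a, b)

end FiberOrder

theorem Cardinal.nonempty_toType_ord {c : Cardinal} (hc : c ≠ 0) : Nonempty c.ord.ToType :=
  Ordinal.nonempty_toType_iff.2 (ord_eq_zero.not.2 hc)

theorem stmt_5_general (κ lam : Cardinal.{0}) (hκ : ℵ₀ ≤ κ) (hlam : ℵ₀ ≤ lam) :
    let A := κ.ord.ToType
    let B := lam.ord.ToType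
    let le : A × B → A × B → Prop := fun x y => x.1 = y.1 ∧ y.2 ≤ x.2
    let compat : A × B → A × B → Prop := fun x y => ∃ z, le z x ∧ le z y
    let dense : Set (A × B) → Prop := fun D => ∀ x, ∃ q ∈ D, le q x
    (sInf {c : Cardinal |
        ¬ ∃ S : Set (A × B), (∀ x ∈ S, ∀ y ∈ S, x ≠ y → ¬ compat x y) ∧ #S = c}
      = Order.succ κ) ∧
    (∀ D : Set (A × B), dense D → ∀ α : A, ∀ β : B, ∃ β' : B, β ≤ β' ∧ (α, β') ∈ D) ∧
    (sInf {c : Cardinal | ∃ D : Set (A × B), dense D ∧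
        ∀ x : A × B, #{q : A × B | q ∈ D ∧ le x q} < c}
      = lam.ord.cof) := by
  intro A B le compat dense
  have := nonempty_toType_ord (aleph0_pos.trans_le hκ).ne'
  have := nonempty_toType_ord (aleph0_pos.trans_le hlam).ne'
  have := Cardinal.noMaxOrder hlam
  refine ⟨?_, fun D hD α β => ?_, ?_⟩
  · rw [← card_ord κ, ← mk_toType κ.ord]
    exact souslinNumber_fiberLE
  · obtain ⟨β', hβ', hββ'⟩ := isCofinal_fiber_of_dense hD α β
    exact ⟨β', hββ', hβ'⟩
  · rw [← Ordinal.cof_toType]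
    exact piNoetherianType_fiberLE

/-- With the order (α,β) ≤ (α',β') iff α = α' ∧ β ≥ β' on κ × λ
(κ, λ infinite cardinals, λ a limit ordinal), the Souslin number is κ⁺, every dense
set meets each fiber cofinally (in the reversed order), and πNt(κ × λ) = cf(λ). -/
theorem stmt_5 (κ lam : Cardinal.{0}) (hκ : ℵ₀ ≤ κ) (hlam : ℵ₀ ≤ lam)
    (hlim : Order.IsSuccLimit lam.ord) :
    let A := κ.ord.ToType
    let B := lam.ord.ToType
    let le : A × B → A × B → Prop := fun x y => x.1 = y.1 ∧ y.2 ≤ x.2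
    let compat : A × B → A × B → Prop := fun x y => ∃ z, le z x ∧ le z y
    let dense : Set (A × B) → Prop := fun D => ∀ x, ∃ q ∈ D, le q x
    (sInf {c : Cardinal |
        ¬ ∃ S : Set (A × B), (∀ x ∈ S, ∀ y ∈ S, x ≠ y → ¬ compat x y) ∧ #S = c}
      = Order.succ κ) ∧
    (∀ D : Set (A × B), dense D → ∀ α : A, ∀ β : B, ∃ β' : B, β ≤ β' ∧ (α, β') ∈ D) ∧
    (sInf {c : Cardinal | ∃ D : Set (A × B), dense D ∧
        ∀ x : A × B, #{q : A × B | q ∈ D ∧ le x q} < c}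
      = lam.ord.cof) :=
  stmt_5_general κ lam hκ hlam
end

section
/- In every nonempty topological space X, there exists a nonempty open set V ⊆ X such that S(W) = S(V) for every nonempty open W ⊆ V. -/
open Cardinal

def IsCellular (Y : Type*) [TopologicalSpace Y] (C : Set (Set Y)) : Prop :=
  (∀ W ∈ C, IsOpen W ∧ W.Nonempty) ∧ C.PairwiseDisjoint id

noncomputable def souslin (Y : Type u) [TopologicalSpace Y] : Cardinal.{u} :=
  sInf {c : Cardinal | ¬ ∃ C : Set (Set Y), IsCellular Y C ∧ #C = c}

/-! Souslin numbers are cardinals, hence well-ordered, so there is a nonempty open set `V` whose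
Souslin number is least among all nonempty open sets. A cellular family in an open `W ⊆ V` is
also one in `V`, so `S(W) ≤ S(V)`, and minimality gives equality. -/

open Function Set

lemma IsCellular.image {Y Z : Type*} [TopologicalSpace Y] [TopologicalSpace Z] {f : Y → Z}
    (hf : IsOpenMap f) (hinj : Injective f) {C : Set (Set Y)} (hC : IsCellular Y C) :
    IsCellular Z (image f '' C) := by
  refine ⟨?_, ?_⟩
  · rintro _ ⟨U, hU, rfl⟩
    exact ⟨hf U (hC.1 U hU).1, (hC.1 U hU).2.image f⟩
  · rintro _ ⟨U, hU, rfl⟩ _ ⟨U', hU', rfl⟩ hne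
    exact (disjoint_image_iff hinj).2 (hC.2 hU hU' fun h => hne (h ▸ rfl))

lemma nonempty_setOf_not_cellular_card (Y : Type u) [TopologicalSpace Y] :
    {c : Cardinal | ¬ ∃ C : Set (Set Y), IsCellular Y C ∧ #C = c}.Nonempty := by
  refine ⟨Order.succ #(Set Y), ?_⟩
  rintro ⟨C, -, hC⟩
  have hle : #C ≤ #(Set Y) := mk_set_le C
  rw [hC] at hle
  exact (Order.lt_succ #(Set Y)).not_ge hle

lemma souslin_le_of_isOpenMap {Y Z : Type u} [TopologicalSpace Y] [TopologicalSpace Z]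
    {f : Y → Z} (hf : IsOpenMap f) (hinj : Injective f) : souslin Y ≤ souslin Z := by
  refine csInf_le_csInf (OrderBot.bddBelow _) (nonempty_setOf_not_cellular_card Z) ?_
  rintro c hc ⟨C, hC, rfl⟩
  exact hc ⟨_, hC.image hf hinj, mk_image_eq (image_injective.2 hinj)⟩

lemma souslin_mono {X : Type u} [TopologicalSpace X] {W V : Set X} (hW : IsOpen W)
    (hWV : W ⊆ V) : souslin W ≤ souslin V :=
  souslin_le_of_isOpenMap (hW.isOpenMap_inclusion hWV) (inclusion_injective hWV)

/-- Every nonempty space has a nonempty open subset V such that all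
nonempty open subsets of V have the same Souslin number as V. -/
theorem stmt_8 {X : Type u} [TopologicalSpace X] [Nonempty X] :
    ∃ V : Set X, IsOpen V ∧ V.Nonempty ∧
      ∀ W : Set X, IsOpen W → W.Nonempty → W ⊆ V → souslin W = souslin V := by
  obtain ⟨V, ⟨hVo, hVne⟩, hmin⟩ :=
    (InvImage.wf (fun V : Set X => souslin V) Cardinal.lt_wf).has_min
      {V | IsOpen V ∧ V.Nonempty} ⟨univ, isOpen_univ, univ_nonempty⟩
  exact ⟨V, hVo, hVne, fun W hWo hWne hWV =>
    (souslin_mono hWo hWV).antisymm (not_lt.1 (hmin W ⟨hWo, hWne⟩))⟩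
end

section
/- Let D be a dense subset of the Hechler forcing ℍ. Then there exists s ∈ ω^{<ω} such that D_s = {f ∈ ω^ω : (s, f) ∈ D} is a dominating family in (ω^ω, ≤*). -/
/-- Eventual domination on ω^ω. -/
def LeStar (f g : ℕ → ℕ) : Prop := ∀ᶠ n in Filter.cofinite, f n ≤ g n

/-- Hechler forcing conditions: a finite sequence together with a function. -/
abbrev Hechler : Type := List ℕ × (ℕ → ℕ)

/-- The Hechler extension relation: `p` extends `q`. -/
def HLe (p q : Hechler) : Prop :=
  q.1 <+: p.1 ∧ (∀ n, p.1.length ≤ n → q.2 n ≤ p.2 n) ∧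
    (∀ n, q.1.length ≤ n → n < p.1.length → q.2 n ≤ p.1.getD n 0)

/-!
Suppose no `D_s` is dominating and pick, for each of the countably many stems `s`, a function
`f s` dominated by no member of `D_s`. A single `F` eventually dominates every `f s`. By density
some `(t, g) ∈ D` extends `([], F)`, so `g` dominates `F` beyond `|t|`, hence dominates `f t`:
a contradiction.
-/

theorem LeStar.trans {f g h : ℕ → ℕ} (hfg : LeStar f g) (hgh : LeStar g h) : LeStar f h :=
  (hfg.and hgh).mono fun _ hn => hn.1.trans hn.2

theorem leStar_of_forall_ge {f g : ℕ → ℕ} (N : ℕ) (h : ∀ n ≥ N, f n ≤ g n) : LeStar f g := by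
  rw [LeStar, Nat.cofinite_eq_atTop, Filter.eventually_atTop]
  exact ⟨N, h⟩

theorem HLe.leStar {p q : Hechler} (h : HLe p q) : LeStar q.2 p.2 :=
  leStar_of_forall_ge p.1.length h.2.1

theorem exists_leStar_of_countable {ι : Type*} [Countable ι] (f : ι → ℕ → ℕ) :
    ∃ F : ℕ → ℕ, ∀ i, LeStar (f i) F := by
  rcases isEmpty_or_nonempty ι with _ | _
  · exact ⟨0, isEmptyElim⟩
  obtain ⟨e, he⟩ := exists_surjective_nat ι
  refine ⟨fun n => (Finset.range (n + 1)).sup fun k => f (e k) n, fun i => ?_⟩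
  obtain ⟨k, rfl⟩ := he i
  refine leStar_of_forall_ge k fun n hkn => ?_
  exact Finset.le_sup (f := fun k => f (e k) n) (Finset.mem_range_succ_iff.mpr hkn)

/-- For every dense subset D of the Hechler forcing there is a finite
sequence s such that D_s = {f : (s, f) ∈ D} is a dominating family. -/
theorem stmt_11 (D : Set Hechler) (hD : ∀ p : Hechler, ∃ q ∈ D, HLe q p) :
    ∃ s : List ℕ, ∀ f : ℕ → ℕ, ∃ g : ℕ → ℕ, (s, g) ∈ D ∧ LeStar f g := by
  by_contra! h
  choose f hf using h
  obtain ⟨F, hF⟩ := exists_leStar_of_countable f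
  obtain ⟨⟨t, g⟩, hq, hle⟩ := hD ([], F)
  exact hf t g hq ((hF t).trans hle.leStar)
end

section
/- If 𝔟 > ℵ₁, then for every dense subset D of the Hechler forcing ℍ and every uncountable cardinal κ < 𝔟, there is a condition p ∈ ℍ extending at least κ many elements of D. Consequently πNt(ℍ) ≥ 𝔟. -/
open Cardinal

noncomputable def bNum : Cardinal.{0} :=
  sInf {c : Cardinal | ∃ A : Set (ℕ → ℕ), #A = c ∧ ¬ ∃ g, ∀ f ∈ A, LeStar f g}

/-!
Fix an uncountable `κ < 𝔟` and a dense `D`. Every `f` is dominated by the majorant of a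
condition of `D` below `([], f)`, so `|D| ≥ 𝔟 > κ` and `κ⁺` many conditions of `D` share a
stem `s`. It remains to find `κ` many functions among theirs bounded *everywhere* by a single
`h`, for then `(s, h)` extends all the corresponding conditions.

By regularity of `κ⁺` a fusion argument gives a branch `c` such that, for every `n`, `κ⁺` many
of the functions agree with `c` below `n`; pick `κ` many of them, `X n`. Being fewer than `𝔟`,
all these functions are `≤*` one `g`. Write `κ` as a countable supremum of cardinals `κₙ` of
uncountable cofinality; pigeonholing on the point from which `f ≤ g` and the values of `f`
before it, `κₙ` many members of `X n` agree with a common `Tₙ` until they fall below `g`.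
Then `h i = max (g i) (c i) (max_{n ≤ i} Tₙ i)` bounds all of these batches.
-/

universe u

lemma exists_le_mk_fiber {α β : Type u} [Countable β] {A : Set α} (F : α → β)
    {μ : Cardinal.{u}} (hμ : ℵ₀ < μ.ord.cof) (hA : μ ≤ #A) :
    ∃ b, μ ≤ #{x ∈ A | F x = b} := by
  obtain ⟨b, hb⟩ := infinite_pigeonhole_card (fun x : A => F x) μ hA
    (hμ.le.trans (Ordinal.cof_ord_le μ)) (mk_le_aleph0.trans_lt hμ)
  exact ⟨b, hb.trans_eq (mk_congr (Equiv.subtypeSubtypeEquivSubtypeInter (· ∈ A) (F · = b)))⟩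

lemma aleph0_lt_cof_ord_succ {κ : Cardinal.{u}} (hκ : ℵ₀ ≤ κ) :
    ℵ₀ < (Order.succ κ).ord.cof := by
  rw [(isRegular_succ hκ).cof_ord]
  exact hκ.trans_lt (Order.lt_succ κ)

lemma exists_lt_mk_section {α β : Type u} [Countable α] {S : Set (α × β)} {κ : Cardinal.{u}}
    (hκ : ℵ₀ ≤ κ) (hS : κ < #S) : ∃ a, κ < #{b | (a, b) ∈ S} := by
  obtain ⟨a, ha⟩ :=
    exists_le_mk_fiber Prod.fst (aleph0_lt_cof_ord_succ hκ) (Order.succ_le_of_lt hS)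
  refine ⟨a, Order.succ_le_iff.1 (ha.trans ((mk_le_mk_of_subset ?_).trans
    (mk_image_le (f := Prod.mk a))))⟩
  rintro ⟨a', b⟩ ⟨hS, rfl⟩
  exact ⟨b, hS, rfl⟩

lemma exists_seq_aleph0_lt_cof_le_iSup {κ : Cardinal.{u}} (hκ : ℵ₀ < κ) :
    ∃ ks : ℕ → Cardinal.{u}, (∀ n, ℵ₀ < (ks n).ord.cof) ∧ (∀ n, ks n ≤ κ) ∧
      κ ≤ ⨆ n, ks n := by
  by_cases hcof : ℵ₀ < κ.ord.cof
  · exact ⟨fun _ => κ, fun _ => hcof, fun _ => le_rfl, le_ciSup bddAbove_of_small 0⟩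
  have hω : κ.ord.cof.ord = Ordinal.omega0 := by
    rw [le_antisymm (not_lt.1 hcof) (Ordinal.aleph0_le_cof_iff.2
      (Ordinal.one_lt_cof_iff.2 (isSuccLimit_ord hκ.le))), ord_aleph0]
  obtain ⟨e, he⟩ := Ordinal.exists_isFundamentalSeq hω
  let ks : ℕ → Cardinal.{u} := fun n =>
    Order.succ (max ℵ₀ (e ⟨n, Ordinal.natCast_lt_omega0 n⟩).1.card)
  refine ⟨ks, fun n => ?_, fun n => Order.succ_le_of_lt (max_lt hκ (lt_ord.1 (e _).2)),
    le_of_forall_lt fun c hc => ?_⟩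
  · exact aleph0_lt_cof_ord_succ (le_max_left _ _)
  · obtain ⟨_, ⟨⟨i, hi⟩, rfl⟩, hci⟩ := he.isCofinal_range ⟨c.ord, ord_lt_ord.2 hc⟩
    obtain ⟨n, rfl⟩ := Ordinal.lt_omega0.1 hi
    calc c = c.ord.card := (card_ord c).symm
      _ ≤ (e ⟨n, hi⟩).1.card := Ordinal.card_le_card hci
      _ < ks n := (le_max_right _ _).trans_lt (Order.lt_succ _)
      _ ≤ ⨆ n, ks n := le_ciSup bddAbove_of_small n

lemma exists_le_mk_agree_below {μ : Cardinal.{0}} (hμ : ℵ₀ < μ.ord.cof) {X : Set (ℕ → ℕ)}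
    (M : (ℕ → ℕ) → ℕ) (hX : μ ≤ #X) :
    ∃ T : ℕ → ℕ, μ ≤ #{f ∈ X | ∀ i < M f, f i = T i} := by
  obtain ⟨L, hL⟩ := exists_le_mk_fiber (fun f => (List.range (M f)).map f) hμ hX
  refine ⟨fun i => L.getD i 0, hL.trans (mk_le_mk_of_subset ?_)⟩
  rintro f ⟨hfX, rfl⟩
  exact ⟨hfX, fun i hi => by simp [hi]⟩

lemma exists_forall_le_mk_agree_below {μ : Cardinal.{0}} (hμ : ℵ₀ < μ.ord.cof)
    {A : Set (ℕ → ℕ)} (hA : μ ≤ #A) :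
    ∃ c : ℕ → ℕ, ∀ n, μ ≤ #{f ∈ A | ∀ i < n, f i = c i} := by
  let large : List ℕ → Prop := fun L => μ ≤ #{f ∈ A | (List.range L.length).map f = L}
  have step : ∀ L, ∃ v, large L → large (L ++ [v]) := by
    intro L
    by_cases hL : large L
    · obtain ⟨v, hv⟩ := exists_le_mk_fiber (fun f => f L.length) hμ hL
      refine ⟨v, fun _ => hv.trans (mk_le_mk_of_subset ?_)⟩
      rintro f ⟨⟨hfA, hfL⟩, hfv⟩
      exact ⟨hfA, by simp [List.range_succ, hfL, hfv]⟩
    · exact ⟨0, fun h => absurd h hL⟩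
  choose next hnext using step
  let seq : ℕ → List ℕ := fun n => Nat.rec [] (fun _ L => L ++ [next L]) n
  have seq_eq : ∀ n, seq n = (List.range n).map fun i => next (seq i) := by
    intro n
    induction n with
    | zero => rfl
    | succ n ih =>
      show seq n ++ [next (seq n)] = _
      rw [List.range_succ, List.map_append, ← ih]
      rfl
  have seq_large : ∀ n, large (seq n) := by
    intro n
    induction n with
    | zero => exact hA.trans (mk_le_mk_of_subset fun f hf => ⟨hf, rfl⟩)
    | succ n ih => exact hnext _ ih
  refine ⟨fun i => next (seq i), fun n => (seq_large n).trans (mk_le_mk_of_subset ?_)⟩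
  rintro f ⟨hfA, hf⟩
  rw [seq_eq, List.length_map, List.length_range, List.map_inj_left] at hf
  exact ⟨hfA, fun i hi => hf i (List.mem_range.2 hi)⟩

lemma bNum_le_mk {A : Set (ℕ → ℕ)} (hA : ¬ ∃ g, ∀ f ∈ A, LeStar f g) : bNum ≤ #A :=
  csInf_le' ⟨A, rfl, hA⟩

lemma exists_leStar_of_mk_lt_bNum {A : Set (ℕ → ℕ)} (hA : #A < bNum) :
    ∃ g, ∀ f ∈ A, LeStar f g :=
  by_contra fun h => (bNum_le_mk h).not_gt hA

lemma LeStar.exists_forall_ge {f g : ℕ → ℕ} (h : LeStar f g) : ∃ m, ∀ i, m ≤ i → f i ≤ g i :=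
  Filter.eventually_atTop.1 (Nat.cofinite_eq_atTop ▸ h)

theorem exists_le_mk_setOf_le {κ : Cardinal.{0}} (hκ : ℵ₀ < κ) (hκb : κ < bNum)
    {A : Set (ℕ → ℕ)} (hA : κ < #A) : ∃ h : ℕ → ℕ, κ ≤ #{f ∈ A | f ≤ h} := by
  obtain ⟨c, hc⟩ := exists_forall_le_mk_agree_below (aleph0_lt_cof_ord_succ hκ.le)
    (Order.succ_le_of_lt hA)
  choose X hXc hXκ using fun n =>
    le_mk_iff_exists_subset.1 ((Order.le_succ κ).trans (hc n))
  have hU : #(⋃ n, X n) ≤ κ := by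
    refine (mk_iUnion_le X).trans ?_
    simp only [hXκ, ciSup_const, mk_nat, aleph0_mul_eq hκ.le, le_rfl]
  obtain ⟨g, hg⟩ := exists_leStar_of_mk_lt_bNum (hU.trans_lt hκb)
  have hM : ∀ f, ∃ m, f ∈ ⋃ n, X n → ∀ i, m ≤ i → f i ≤ g i := fun f => by
    by_cases hf : f ∈ ⋃ n, X n
    · obtain ⟨m, hm⟩ := (hg f hf).exists_forall_ge
      exact ⟨m, fun _ => hm⟩
    · exact ⟨0, fun h => absurd h hf⟩
  choose M hM using hM
  obtain ⟨ks, hks_cof, hks_le, hκ_le⟩ := exists_seq_aleph0_lt_cof_le_iSup hκ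
  choose T hT using fun n =>
    exists_le_mk_agree_below (hks_cof n) M ((hks_le n).trans (hXκ n).ge)
  refine ⟨fun i => max (g i) (max (c i) ((Finset.range (i + 1)).sup fun n => T n i)),
    hκ_le.trans (ciSup_le fun n => (hT n).trans (mk_le_mk_of_subset ?_))⟩
  rintro f ⟨hfX, hfT⟩
  obtain ⟨hfA, hfc⟩ := hXc n hfX
  refine ⟨hfA, fun i => ?_⟩
  by_cases hin : i < n
  · exact (hfc i hin).le.trans ((le_max_left _ _).trans (le_max_right _ _))
  by_cases hiM : i < M f
  · rw [hfT i hiM]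
    refine le_trans ?_ ((le_max_right _ _).trans (le_max_right _ _))
    exact Finset.le_sup (f := fun n => T n i) (Finset.mem_range.2 (by omega))
  · exact (hM f (Set.mem_iUnion.2 ⟨n, hfX⟩) i (not_lt.1 hiM)).trans (le_max_left _ _)

def majorant (q : Hechler) : ℕ → ℕ := fun n => max (q.1.getD n 0) (q.2 n)

lemma le_majorant_of_HLe_nil {q : Hechler} {f : ℕ → ℕ} (h : HLe q ([], f)) :
    f ≤ majorant q := fun n => by
  rcases lt_or_ge n q.1.length with hn | hn
  · exact le_max_of_le_left (h.2.2 n (Nat.zero_le n) hn)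
  · exact le_max_of_le_right (h.2.1 n hn)

lemma HLe_refl (p : Hechler) : HLe p p :=
  ⟨List.prefix_rfl, fun _ _ => le_rfl, fun _ h₁ h₂ => absurd h₂ (not_lt.2 h₁)⟩

lemma HLe_of_le (s : List ℕ) {f g : ℕ → ℕ} (h : f ≤ g) : HLe (s, g) (s, f) :=
  ⟨List.prefix_rfl, fun n _ => h n, fun _ h₁ h₂ => absurd h₂ (not_lt.2 h₁)⟩

lemma bNum_le_mk_of_dense {D : Set Hechler} (hD : ∀ p : Hechler, ∃ q ∈ D, HLe q p) :
    bNum ≤ #D := by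
  refine (bNum_le_mk ?_).trans (mk_image_le (f := majorant))
  rintro ⟨g, hg⟩
  obtain ⟨q, hqD, hq⟩ := hD ([], fun n => g n + 1)
  obtain ⟨n, hn⟩ := (hg _ ⟨q, hqD, rfl⟩).exists
  have : g n + 1 ≤ majorant q n := le_majorant_of_HLe_nil hq n
  omega

theorem exists_le_mk_extended_of_dense {D : Set Hechler}
    (hD : ∀ p : Hechler, ∃ q ∈ D, HLe q p) {κ : Cardinal.{0}} (hκ : ℵ₀ < κ) (hκb : κ < bNum) :
    ∃ p : Hechler, κ ≤ #{q : Hechler | q ∈ D ∧ HLe p q} := by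
  obtain ⟨s, hs⟩ := exists_lt_mk_section hκ.le (hκb.trans_le (bNum_le_mk_of_dense hD))
  obtain ⟨h, hh⟩ := exists_le_mk_setOf_le hκ hκb hs
  refine ⟨(s, h), hh.trans (mk_le_of_injective (f := fun f => ⟨(s, f.1), f.2.1,
    HLe_of_le s f.2.2⟩) fun f f' hff' => Subtype.ext ?_)⟩
  exact congrArg (fun q : {q : Hechler | q ∈ D ∧ HLe (s, h) q} => q.1.2) hff'

/-- If 𝔟 > ℵ₁ then for every dense D ⊆ ℍ and uncountable κ < 𝔟 some
condition extends at least κ many members of D; consequently πNt(ℍ) ≥ 𝔟. -/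
theorem stmt_13 (hb : aleph 1 < bNum) :
    (∀ D : Set Hechler, (∀ p : Hechler, ∃ q ∈ D, HLe q p) →
      ∀ κ : Cardinal, ℵ₀ < κ → κ < bNum →
        ∃ p : Hechler, κ ≤ #{q : Hechler | q ∈ D ∧ HLe p q}) ∧
    bNum ≤ sInf {c : Cardinal | ∃ D : Set Hechler,
      (∀ p : Hechler, ∃ q ∈ D, HLe q p) ∧
      ∀ p : Hechler, #{q : Hechler | q ∈ D ∧ HLe p q} < c} := by
  refine ⟨fun D hD κ hκ hκb => exists_le_mk_extended_of_dense hD hκ hκb, le_csInf ?_ ?_⟩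
  · exact ⟨Order.succ #Hechler, Set.univ, fun p => ⟨p, trivial, HLe_refl p⟩,
      fun _ => (mk_set_le _).trans_lt (Order.lt_succ _)⟩
  · rintro c ⟨D, hD, hc⟩
    by_contra! hcb
    obtain ⟨p, hp⟩ := exists_le_mk_extended_of_dense hD
      (aleph0_lt_aleph_one.trans_le (le_max_right c (aleph 1))) (max_lt hcb hb)
    exact (hc p).not_ge ((le_max_left _ _).trans hp)
end

section
/- If λ is an infinite cardinal with λ^{<κ} = λ for a regular cardinal κ ≤ λ, then the Very Weak Square principle VWS(λ, κ, κ) holds: there is a sequence ⟨C_α : α < λ⁺⟩ and a club D ⊆ λ⁺ such that for each α ∈ D with cf(α) ≥ κ, C_α is a cofinal subset of α ∩ D of order type cf(α), and for each X ∈ [C_α]^{<κ} there is ξ < α with X ⊆ C_ξ and C_ξ ∈ [C_α]^{<κ}. -/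
/-!
Let θ = λ (as an initial ordinal) and split λ⁺ into the blocks [θ·δ, θ·(δ+1)). Since
λ^{<κ} = λ, the (<κ)-sized subsets of θ·δ can be listed as C_{θ·δ+i}, i < θ, inside block δ.
The club D consists of the points θ·ρ with ρ limit together with the successor points θ·δ+1,
and at α = θ·ρ we take C_α = {θ·f(i)+1 : i < cf ρ} for a fundamental sequence f of ρ; then
cf α = cf ρ. A set X ⊆ C_α of size < κ ≤ cf α is bounded below α, hence lies in some θ·δ with
δ < ρ a successor, and so X = C_ξ for some ξ in block δ, below α.
-/

universe u v

open Cardinal Set Order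

namespace Cardinal

theorem lift_powerlt_le {a b : Cardinal.{u}} :
    lift.{v} a ^< lift.{v} b ≤ lift.{v} (a ^< b) := by
  refine powerlt_le.2 fun c hc => ?_
  obtain ⟨c, hcb, rfl⟩ := lt_lift_iff.1 hc
  rw [← lift_power, lift_le]
  exact le_powerlt a hcb

theorem mk_bounded_subset_lt_le {α : Type u} {s : Set α} {κ lam : Cardinal.{u}} (hlam : ℵ₀ ≤ lam)
    (hκ : κ ≤ lam) (hs : #s ≤ lam) (hpow : lam ^< κ ≤ lam) :
    #{t : Set α | t ⊆ s ∧ #t < κ} ≤ lam := by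
  -- The sizes below `κ` are the cardinalities of the initial segments of `κ.ord.ToType`.
  let small : κ.ord.ToType → Set (Set α) := fun i => {t | t ⊆ s ∧ #t ≤ #(Iio i)}
  have hcover : {t : Set α | t ⊆ s ∧ #t < κ} ⊆ ⋃ i, small i := by
    rintro t ⟨hts, htκ⟩
    obtain ⟨i, hi⟩ := Ordinal.typein_surj (α := κ.ord.ToType) (· < ·)
      (o := (#t).ord) (by rwa [Ordinal.type_toType, ord_lt_ord])
    exact mem_iUnion.2 ⟨i, hts, by rw [← card_ord #t, ← hi]; rfl⟩
  have hsmall : ∀ i, #(small i) ≤ lam := fun i => calc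
    #(small i) ≤ max #s ℵ₀ ^ #(Iio i) := mk_bounded_subset_le s _
    _ ≤ lam ^ #(Iio i) := power_le_power_right (max_le hs hlam)
    _ ≤ lam := (le_powerlt lam (by simpa using mk_Iio_lt i (by simp))).trans hpow
  calc #{t : Set α | t ⊆ s ∧ #t < κ} ≤ #(⋃ i, small i) := mk_le_mk_of_subset hcover
    _ ≤ #κ.ord.ToType * ⨆ i, #(small i) := mk_iUnion_le small
    _ ≤ lam * lam := by rw [mk_ord_toType]; gcongr; exact ciSup_le' hsmall
    _ = lam := mul_eq_self hlam

end Cardinal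

theorem Set.exists_surjOn_of_mk_le {α β : Type u} [Nonempty β] {s : Set α} {t : Set β}
    (h : #t ≤ #s) : ∃ f : α → β, SurjOn f s t := by
  obtain ⟨e⟩ := h
  refine ⟨Function.extend (fun y : t => (e y : α)) (↑) fun _ => Classical.arbitrary β,
    fun y hy => ⟨e ⟨y, hy⟩, (e _).2, ?_⟩⟩
  exact (Subtype.val_injective.comp e.injective).extend_apply _ _ (⟨y, hy⟩ : t)

namespace Ordinal

theorem exists_isSuccLimit_eq_mul {θ α : Ordinal} (hθ : θ ≠ 0) (hα : α ≠ 0)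
    (h : ∀ c, θ * c < α → θ * (c + 1) < α) : ∃ ρ, IsSuccLimit ρ ∧ α = θ * ρ := by
  have hdiv : θ * (α / θ) = α := (mul_div_le α θ).eq_or_lt.resolve_right fun hlt =>
    (h _ hlt).not_gt (lt_mul_succ_div α hθ)
  refine ⟨α / θ, ?_, hdiv.symm⟩
  rcases zero_or_succ_or_isSuccLimit (α / θ) with h0 | ⟨p, hp⟩ | hlim
  · rw [h0, mul_zero] at hdiv
    exact absurd hdiv.symm hα
  · rw [← hp, succ_eq_add_one] at hdiv
    have := h p (hdiv ▸ (isNormal_mul_right hθ.pos).strictMono (lt_add_one p))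
    exact absurd hdiv this.ne
  · exact hlim

theorem exists_surjOn_subsets_lt {κ lam : Cardinal.{u}} (hlam : ℵ₀ ≤ lam) (hκ : κ ≤ lam)
    (hpow : lam ^< κ ≤ lam) : ∃ E : Ordinal.{u} → Ordinal.{u} → Set Ordinal.{u},
      ∀ b, b.card ≤ lam →
        SurjOn (E b) (Iio lam.ord) {X | X ⊆ Iio b ∧ #X < Cardinal.lift.{u + 1} κ} := by
  have (b : Ordinal.{u}) (hb : b.card ≤ lam) : ∃ e : Ordinal.{u} → Set Ordinal.{u},
      SurjOn e (Iio lam.ord) {X | X ⊆ Iio b ∧ #X < Cardinal.lift.{u + 1} κ} := by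
    apply Set.exists_surjOn_of_mk_le
    rw [Cardinal.mk_Iio_ordinal, card_ord]
    apply mk_bounded_subset_lt_le (aleph0_le_lift.2 hlam) (Cardinal.lift_le.2 hκ)
    · rw [Cardinal.mk_Iio_ordinal]
      exact Cardinal.lift_le.2 hb
    · exact lift_powerlt_le.trans (Cardinal.lift_le.2 hpow)
  choose! E hE using this
  exact ⟨E, hE⟩

end Ordinal

namespace VeryWeakSquare

open Ordinal

variable {θ μ : Ordinal.{u}}

-- The successor points `θ * δ + 1` carry no requirement (their cofinality is 1); they are there
-- so that the ladders below can lie inside the club.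
def club (θ μ : Ordinal.{u}) : Set Ordinal.{u} :=
  {ξ | ξ < μ ∧ ((∃ ρ, IsSuccLimit ρ ∧ ξ = θ * ρ) ∨ ∃ δ, ξ = θ * δ + 1)}

theorem mul_add_one_le_of_mem_club {γ c : Ordinal.{u}} (hγ : γ ∈ club θ μ)
    (h : θ * c + 1 < γ) : θ * (c + 1) ≤ γ := by
  rcases hγ.2 with ⟨ρ, -, rfl⟩ | ⟨δ, rfl⟩
  · have hcρ : c < ρ := lt_of_mul_lt_mul_left ((lt_add_one _).trans h) zero_le
    exact mul_le_mul_right (add_one_le_iff.2 hcρ) θ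
  · have hcδ : c < δ := lt_of_mul_lt_mul_left (add_one_le_iff.1 (lt_add_one_iff.1 h)) zero_le
    exact (mul_le_mul_right (add_one_le_iff.2 hcδ) θ).trans le_self_add

theorem mem_club_of_isSuccLimit (hθ : θ ≠ 0) {α : Ordinal.{u}} (hαμ : α < μ) (hα : IsSuccLimit α)
    (hD : ∀ β < α, ∃ γ ∈ club θ μ, β < γ ∧ γ < α) : α ∈ club θ μ := by
  refine ⟨hαμ, Or.inl (exists_isSuccLimit_eq_mul hθ hα.ne_bot fun c hc => ?_)⟩
  obtain ⟨γ, hγ, hcγ, hγα⟩ := hD (θ * c + 1) (hα.add_one_lt hc)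
  exact (mul_add_one_le_of_mem_club hγ hcγ).trans_lt hγα

theorem exists_mem_club_gt {c : Cardinal.{u}} (hc : ℵ₀ ≤ c) (hθ : 0 < θ) (hθc : θ < c.ord)
    {α : Ordinal.{u}} (hα : α < c.ord) : ∃ β ∈ club θ c.ord, α < β := by
  have h1 : (1 : Ordinal) < c.ord := one_lt_of_isSuccLimit (Cardinal.isSuccLimit_ord hc)
  refine ⟨θ * α + 1, ⟨?_, Or.inr ⟨α, rfl⟩⟩, (le_mul_right α hθ).trans_lt (lt_add_one _)⟩
  exact isPrincipal_add_ord hc (isPrincipal_mul_ord hc hθc hα) h1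

def ladder (θ : Ordinal.{u}) {a ρ : Ordinal.{u}} (f : Iio a → Iio ρ) : Set Ordinal.{u} :=
  range fun i => θ * (f i : Ordinal) + 1

section ladder

variable {a ρ : Ordinal.{u}} {f : Iio a → Iio ρ}

theorem lt_of_mem_ladder (hθ : 1 < θ) {ξ : Ordinal.{u}} (hξ : ξ ∈ ladder θ f) : ξ < θ * ρ := by
  obtain ⟨i, rfl⟩ := hξ
  calc θ * (f i : Ordinal) + 1 < θ * (f i : Ordinal) + θ := add_lt_add_right hθ _
    _ = θ * ((f i : Ordinal) + 1) := (mul_add_one _ _).symm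
    _ ≤ θ * ρ := mul_le_mul_right (add_one_le_iff.2 (f i).2) θ

theorem ladder_subset_club (hθ : 1 < θ) (hρμ : θ * ρ ≤ μ) : ladder θ f ⊆ club θ μ := by
  rintro _ ⟨i, rfl⟩
  exact ⟨(lt_of_mem_ladder hθ ⟨i, rfl⟩).trans_le hρμ, Or.inr ⟨_, rfl⟩⟩

theorem exists_mem_ladder_ge (hθ : 0 < θ) (hρ : IsSuccLimit ρ) (hf : IsCofinal (range f))
    {β : Ordinal.{u}} (hβ : β < θ * ρ) : ∃ ξ ∈ ladder θ f, β ≤ ξ := by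
  obtain ⟨c, hc, hβc⟩ := ((isNormal_mul_right hθ).lt_iff_exists_lt hρ).1 hβ
  obtain ⟨_, ⟨i, rfl⟩, hci⟩ := hf ⟨c, hc⟩
  exact ⟨_, ⟨i, rfl⟩, hβc.le.trans ((mul_le_mul_right (show c ≤ f i from hci) θ).trans le_self_add)⟩

theorem type_ladder (hθ : 0 < θ) (hf : StrictMono f) :
    typeLT (ladder θ f) = Ordinal.lift.{u + 1} a := by
  have hmono : StrictMono fun i => θ * (f i : Ordinal) + 1 := fun i j hij =>
    lt_add_one_iff.2 (add_one_le_iff.2 ((isNormal_mul_right hθ).strictMono (hf hij)))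
  rw [← type_lt_Iio, ladder, (hmono.orderIso _).symm.ordinalType_congr]

end ladder

theorem exists_isSuccLimit_eq_mul_of_mem_club {α : Ordinal.{u}} (hα : α ∈ club θ μ)
    (hcof : 1 < α.cof) : ∃ ρ, IsSuccLimit ρ ∧ α = θ * ρ := by
  rcases hα.2 with h | ⟨δ, rfl⟩
  · exact h
  · rw [cof_add_one] at hcof
    exact absurd hcof (lt_irrefl 1)

-- Writing `ξ = θ * δ + i` with `i < θ`: the ladder at `θ * δ` when `δ` is a limit, and otherwise
-- the `i`-th entry of the listing `E (θ * δ)` of the small subsets of `θ * δ`.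
open Classical in
noncomputable def seq (θ : Ordinal.{u}) (fs : ∀ ρ : Ordinal.{u}, Iio ρ.cof.ord → Iio ρ)
    (E : Ordinal.{u} → Ordinal.{u} → Set Ordinal.{u}) (ξ : Ordinal.{u}) : Set Ordinal.{u} :=
  if IsSuccLimit (ξ / θ) then ladder θ (fs (ξ / θ)) else E (θ * (ξ / θ)) (ξ % θ)

section seq

variable {fs : ∀ ρ : Ordinal.{u}, Iio ρ.cof.ord → Iio ρ}
  {E : Ordinal.{u} → Ordinal.{u} → Set Ordinal.{u}}

theorem seq_mul (hθ : θ ≠ 0) {ρ : Ordinal.{u}} (hρ : IsSuccLimit ρ) :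
    seq θ fs E (θ * ρ) = ladder θ (fs ρ) := by
  rw [seq, mul_div_cancel _ hθ, if_pos hρ]

theorem seq_mul_add {δ i : Ordinal.{u}} (hi : i < θ) (hδ : ¬IsSuccLimit δ) :
    seq θ fs E (θ * δ + i) = E (θ * δ) i := by
  have hθ : θ ≠ 0 := (pos_of_gt hi).ne'
  rw [seq, mul_add_div _ hθ, div_eq_zero_of_lt hi, add_zero, if_neg hδ, mul_add_mod_self,
    mod_eq_of_lt hi]

theorem exists_seq_eq {κ : Cardinal.{u + 1}} {ρ : Ordinal.{u}} (hθ : θ ≠ 0) (hρ : IsSuccLimit ρ)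
    (hE : ∀ b < θ * ρ, SurjOn (E b) (Iio θ) {X | X ⊆ Iio b ∧ #X < κ})
    {X : Set Ordinal.{u}} (hX : ∀ x ∈ X, x < θ * ρ)
    (hXcof : #X < (Ordinal.lift.{u + 1} (θ * ρ)).cof) (hXκ : #X < κ) : ∃ ξ < θ * ρ, seq θ fs E ξ = X := by
  have hsup : sSup X < θ * ρ := sSup_lt_of_lt_cof hXcof hX
  obtain ⟨δ, hδρ, hXδ, hδ⟩ : ∃ δ < ρ, X ⊆ Iio (θ * δ) ∧ ¬IsSuccLimit δ :=
    ⟨sSup X / θ + 1, hρ.add_one_lt ((lt_mul_iff_div_lt hθ).1 hsup), fun x hx =>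
      (le_csSup ⟨θ * ρ, fun y hy => (hX y hy).le⟩ hx).trans_lt (lt_mul_succ_div _ hθ),
      not_isSuccLimit_add_one _⟩
  obtain ⟨i, hi, rfl⟩ := hE (θ * δ) ((isNormal_mul_right hθ.pos).strictMono hδρ) ⟨hXδ, hXκ⟩
  refine ⟨θ * δ + i, ?_, seq_mul_add hi hδ⟩
  calc θ * δ + i < θ * δ + θ := add_lt_add_right hi _
    _ = θ * (δ + 1) := (mul_add_one _ _).symm
    _ ≤ θ * ρ := mul_le_mul_right (add_one_le_iff.2 hδρ) θ

end seq

end VeryWeakSquare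

open VeryWeakSquare Ordinal

/-- If λ^{<κ} = λ with κ ≤ λ regular, then the Very Weak Square
principle VWS(λ, κ, κ) holds: there is a sequence ⟨C_α : α < λ⁺⟩ and a club D ⊆ λ⁺
such that for each α ∈ D of cofinality ≥ κ, C_α is cofinal in α ∩ D of order type
cf(α), and every (<κ)-sized subset of C_α is covered by some C_ξ (ξ < α) which is a
(<κ)-sized subset of C_α. -/
theorem stmt_18 (lam κ : Cardinal.{0}) (hκ : κ.IsRegular) (hκlam : κ ≤ lam)
    (hlam : ℵ₀ ≤ lam) (hpow : lam ^< κ = lam) :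
    ∃ (C : Ordinal.{0} → Set Ordinal.{0}) (D : Set Ordinal.{0}),
      -- D is a subset of λ⁺ = ord of the successor cardinal of λ
      (∀ β ∈ D, β < (Order.succ lam).ord) ∧
      -- D is closed in λ⁺: limit points below λ⁺ of D belong to D
      (∀ α < (Order.succ lam).ord, Order.IsSuccLimit α →
        (∀ β < α, ∃ γ ∈ D, β < γ ∧ γ < α) → α ∈ D) ∧
      -- D is unbounded in λ⁺
      (∀ α < (Order.succ lam).ord, ∃ β ∈ D, α < β) ∧
      -- the VWS properties at every α ∈ D of cofinality ≥ κ
      (∀ α ∈ D, κ ≤ α.cof →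
        (C α ⊆ D ∧ (∀ ξ ∈ C α, ξ < α) ∧
          (∀ β < α, ∃ ξ ∈ C α, β ≤ ξ) ∧
          Ordinal.type ((· < ·) : C α → C α → Prop) = Ordinal.lift.{1} α.cof.ord ∧
          (∀ X : Set Ordinal, X ⊆ C α → #X < Cardinal.lift.{1} κ →
            ∃ ξ < α, X ⊆ C ξ ∧ C ξ ⊆ C α ∧ #(C ξ) < Cardinal.lift.{1} κ))) := by
  set θ := lam.ord
  have hθ : 1 < θ := one_lt_of_isSuccLimit (isSuccLimit_ord hlam)
  have hθ0 : θ ≠ 0 := (zero_lt_one.trans hθ).ne'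
  obtain ⟨E, hE⟩ := exists_surjOn_subsets_lt hlam hκlam hpow.le
  choose fs hfs using fun ρ : Ordinal.{0} => exists_isFundamentalSeq (o := ρ) rfl
  refine ⟨seq θ fs E, club θ (Order.succ lam).ord, fun _ h => h.1,
    fun α hαμ hα hD => mem_club_of_isSuccLimit hθ0 hαμ hα hD,
    fun α hα => exists_mem_club_gt (hlam.trans (Order.le_succ lam)) (zero_lt_one.trans hθ)
      (ord_lt_ord.2 (Order.lt_succ lam)) hα, fun α hα hκα => ?_⟩
  obtain ⟨ρ, hρ, rfl⟩ := exists_isSuccLimit_eq_mul_of_mem_club hα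
    (one_lt_aleph0.trans_le (hκ.aleph0_le.trans hκα))
  rw [seq_mul hθ0 hρ]
  refine ⟨ladder_subset_club hθ hα.1.le, fun ξ => lt_of_mem_ladder hθ,
    fun β => exists_mem_ladder_ge (zero_lt_one.trans hθ) hρ (hfs ρ).isCofinal_range,
    by rw [type_ladder (zero_lt_one.trans hθ) (hfs ρ).strictMono, cof_mul hθ0 hρ.isSuccPrelimit],
    fun X hXC hXκ => ?_⟩
  have hE' : ∀ b < θ * ρ, SurjOn (E b) (Iio θ) {X | X ⊆ Iio b ∧ #X < Cardinal.lift.{1} κ} :=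
    fun b hb => hE b (Order.lt_succ_iff.1 (lt_ord.1 (hb.trans hα.1)))
  obtain ⟨ξ, hξ, rfl⟩ := exists_seq_eq (fs := fs) hθ0 hρ hE'
    (fun x hx => lt_of_mem_ladder hθ (hXC hx))
    (hXκ.trans_le (by rw [← lift_cof]; exact Cardinal.lift_le.2 hκα)) hXκ
  exact ⟨ξ, hξ, subset_rfl, hXC, hXκ⟩
end
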